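/- arXiv:2106.07593 — 2 statements merged into one kernel-verified Lean document; each statement's English description precedes it below -/
import Mathlib

section
/- Let s ∈ (0,1) and set β₀ = max(2s−1, 0). Then: (a) β = 0 and β = 2s−1 are both solutions of equation (E); (b) the set of solutions of (E) in the open interval (β₀, ∞) is an infinite strictly increasing sequence β₁ < β₂ < β₃ < … tending to +∞, and for every k ≥ 1 the number β_k is the unique solution of (E) in the interval (k+β₀, k+s), there being no solutions of (E) in (β₀,∞) outside the union of these intervals; (c) β_{k+1} > 1 + β_k for every k ≥ 1; (d) β₁ ∈ (max(1,2s), 1+s), i.e., setting α_s := β₁ − 2s, one has α_s ∈ (0, 1−s) and 2s + α_s > 1. -/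
open Real Set Filter

/-- Equation (E): `Γ(β+1)Γ(2s-β)sin(π(β-s)) = -Γ(2s)sin(πs)`. -/
def SolE (s β : ℝ) : Prop :=
  Real.Gamma (β+1) * Real.Gamma (2*s-β) * Real.sin (π*(β-s))
    = -(Real.Gamma (2*s) * Real.sin (π*s))

open Topology

noncomputable section

namespace ExpAux


/-- log of Gamma -/
def lg (x : ℝ) : ℝ := Real.log (Real.Gamma x)

/-- the two-term log-Gamma difference `log Γ(x+s) - log Γ(x)` -/
def Df (s x : ℝ) : ℝ := lg (x + s) - lg x

lemma lg_add_one {x : ℝ} (hx : 0 < x) : lg (x+1) = Real.log x + lg x := by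
  rw [lg, lg, Real.Gamma_add_one hx.ne', Real.log_mul hx.ne' (Real.Gamma_pos_of_pos hx).ne']

lemma strictConcave_logdiff {a b : ℝ} (ha : 0 ≤ a) (hab : a < b) :
    StrictConcaveOn ℝ (Ioi 0) (fun x : ℝ => Real.log (x+a) - Real.log (x+b)) := by
  have hb : 0 ≤ b := ha.trans hab.le
  have hder : ∀ y ∈ Ioi (0:ℝ), HasDerivAt (fun x : ℝ => Real.log (x+a) - Real.log (x+b))
      (1/(y+a) - 1/(y+b)) y := by
    intro y hy
    have hya : 0 < y + a := by simp at hy; linarith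
    have hyb : 0 < y + b := by simp at hy; linarith
    have h1 : HasDerivAt (fun x : ℝ => x + a) 1 y := (hasDerivAt_id y).add_const a
    have h2 : HasDerivAt (fun x : ℝ => x + b) 1 y := (hasDerivAt_id y).add_const b
    exact (h1.log hya.ne').sub (h2.log hyb.ne')
  apply strictConcaveOn_of_deriv2_neg (convex_Ioi 0)
  · apply ContinuousOn.sub
    · apply ContinuousOn.log (by fun_prop)
      intro x hx; simp at hx; positivity
    · apply ContinuousOn.log (by fun_prop)
      intro x hx; simp at hx; positivity
  · intro x hx
    rw [interior_Ioi] at hx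
    have hxx : (0:ℝ) < x := hx
    have hxa : 0 < x + a := by linarith
    have hxb : 0 < x + b := by linarith
    have e1 : deriv (fun x : ℝ => Real.log (x+a) - Real.log (x+b)) =ᶠ[nhds x]
        (fun y : ℝ => 1/(y+a) - 1/(y+b)) := by
      filter_upwards [isOpen_Ioi.mem_nhds hx] with y hy
      exact (hder y hy).deriv
    have h2 : HasDerivAt (fun y : ℝ => 1/(y+a) - 1/(y+b))
        (-(1/(x+a)^2) + 1/(x+b)^2) x := by
      have h1 : HasDerivAt (fun y : ℝ => y + a) 1 x := (hasDerivAt_id x).add_const a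
      have h2 : HasDerivAt (fun y : ℝ => y + b) 1 x := (hasDerivAt_id x).add_const b
      have i1 := h1.inv hxa.ne'
      have i2 := h2.inv hxb.ne'
      have := i1.sub i2
      simp only [one_div]
      exact this.congr_deriv (by ring)
    have : deriv^[2] (fun x : ℝ => Real.log (x+a) - Real.log (x+b)) x
        = -(1/(x+a)^2) + 1/(x+b)^2 := by
      simp only [Function.iterate_succ, Function.iterate_zero, Function.comp_apply, id_eq]
      rw [e1.deriv_eq]
      exact h2.deriv
    rw [this]
    have hlt : (x+a)^2 < (x+b)^2 := by nlinarith
    have : 1/(x+b)^2 < 1/(x+a)^2 := by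
      apply one_div_lt_one_div_of_lt (by positivity) hlt
    linarith

lemma concave_sum_range {m : ℕ} {f : ℕ → ℝ → ℝ}
    (h : ∀ j, j < m → ConcaveOn ℝ (Ioi (0:ℝ)) (f j)) :
    ConcaveOn ℝ (Ioi (0:ℝ)) (fun x => ∑ j ∈ Finset.range m, f j x) := by
  induction m with
  | zero => simpa using concaveOn_const 0 (convex_Ioi 0)
  | succ n ih =>
    simp only [Finset.sum_range_succ]
    exact (ih fun j hj => h j (hj.trans n.lt_succ_self)).add (h n n.lt_succ_self)

/-- partial-sum approximation of `Df` coming from Euler's limit formula -/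
def Fn (s x : ℝ) (n : ℕ) : ℝ :=
  s * Real.log n + ∑ j ∈ Finset.range (n+1), (Real.log (x+j) - Real.log (x+j+s))

lemma GammaSeq_pos {x : ℝ} (hx : 0 < x) {n : ℕ} (hn : 1 ≤ n) : 0 < Real.GammaSeq x n := by
  rw [Real.GammaSeq]
  have h1 : (0:ℝ) < (n:ℝ) ^ x := Real.rpow_pos_of_pos (by exact_mod_cast hn) x
  have h2 : (0:ℝ) < ∏ j ∈ Finset.range (n + 1), (x + j) := by
    apply Finset.prod_pos; intro j _; positivity
  positivity

lemma GammaSeq_ratio {s x : ℝ} (hs : 0 < s) (hx : 0 < x) {n : ℕ} (hn : 1 ≤ n) :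
    Real.GammaSeq (x+s) n / Real.GammaSeq x n
      = (n:ℝ) ^ s * ∏ j ∈ Finset.range (n+1), ((x+j)/(x+j+s)) := by
  have hn0 : (0:ℝ) < (n:ℝ) := by exact_mod_cast hn
  have hP0 : (0:ℝ) < ∏ j ∈ Finset.range (n + 1), (x + j) := by
    apply Finset.prod_pos; intro j _; positivity
  have hP1 : (0:ℝ) < ∏ j ∈ Finset.range (n + 1), (x + s + j) := by
    apply Finset.prod_pos; intro j _; positivity
  have hfac : (0:ℝ) < (n.factorial : ℝ) := by exact_mod_cast n.factorial_pos
  rw [Real.GammaSeq, Real.GammaSeq, Finset.prod_div_distrib]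
  have hrs : (n:ℝ) ^ (x + s) = (n:ℝ) ^ x * (n:ℝ) ^ s := Real.rpow_add hn0 x s
  have hprod : ∏ j ∈ Finset.range (n+1), (x + j + s) = ∏ j ∈ Finset.range (n+1), (x + s + j) := by
    apply Finset.prod_congr rfl; intro j _; ring
  rw [hrs, hprod]
  have hnx : (0:ℝ) < (n:ℝ) ^ x := Real.rpow_pos_of_pos hn0 x
  field_simp

lemma log_GammaSeq_ratio {s x : ℝ} (hs : 0 < s) (hx : 0 < x) {n : ℕ} (hn : 1 ≤ n) :
    Real.log (Real.GammaSeq (x+s) n / Real.GammaSeq x n) = Fn s x n := by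
  rw [GammaSeq_ratio hs hx hn]
  have hn0 : (0:ℝ) < (n:ℝ) := by exact_mod_cast hn
  rw [Real.log_mul (by positivity) ?hP, Real.log_rpow hn0, Real.log_prod, Fn]
  · congr 1
    apply Finset.sum_congr rfl
    intro j _
    rw [Real.log_div (by positivity) (by positivity)]
  · intro j _
    have : (0:ℝ) < x + j := by positivity
    have : (0:ℝ) < x + j + s := by positivity
    positivity
  case hP =>
    have : (0:ℝ) < ∏ j ∈ Finset.range (n+1), ((x+j)/(x+j+s)) := by
      apply Finset.prod_pos; intro j _
      have : (0:ℝ) < x + j := by positivity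
      have : (0:ℝ) < x + j + s := by positivity
      positivity
    exact this.ne'

lemma tendsto_Fn {s x : ℝ} (hs : 0 < s) (hx : 0 < x) :
    Tendsto (Fn s x) atTop (𝓝 (Df s x)) := by
  have hxs : 0 < x + s := by linarith
  have hGx := Real.Gamma_pos_of_pos hx
  have hGxs := Real.Gamma_pos_of_pos hxs
  have hdiv : Tendsto (fun n => Real.GammaSeq (x+s) n / Real.GammaSeq x n) atTop
      (𝓝 (Real.Gamma (x+s) / Real.Gamma x)) :=
    (Real.GammaSeq_tendsto_Gamma (x+s)).div (Real.GammaSeq_tendsto_Gamma x) hGx.ne'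
  have hlog := hdiv.log (by positivity)
  have heq : Real.log (Real.Gamma (x+s) / Real.Gamma x) = Df s x := by
    rw [Real.log_div hGxs.ne' hGx.ne', Df, lg, lg]
  rw [heq] at hlog
  apply hlog.congr'
  filter_upwards [eventually_ge_atTop 1] with n hn
  exact log_GammaSeq_ratio hs hx hn

lemma concave_Fn {s : ℝ} (hs : 0 < s) (n : ℕ) :
    ConcaveOn ℝ (Ioi (0:ℝ)) (fun x => Fn s x n) := by
  have h : ConcaveOn ℝ (Ioi (0:ℝ))
      (fun x => ∑ j ∈ Finset.range (n+1), (Real.log (x+j) - Real.log (x+j+s))) := by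
    apply concave_sum_range
    intro j _
    have := (strictConcave_logdiff (a := j) (b := j + s) (by positivity) (by linarith)).concaveOn
    simpa only [add_assoc] using this
  exact (concaveOn_const (s * Real.log n) (convex_Ioi (0:ℝ))).add h

lemma concave_Df {s : ℝ} (hs : 0 < s) : ConcaveOn ℝ (Ioi (0:ℝ)) (Df s) := by
  refine ⟨convex_Ioi 0, ?_⟩
  intro x hx y hy a b ha hb hab
  have hz : (0:ℝ) < a • x + b • y := by
    rcases eq_or_lt_of_le ha with h|h
    · simp [← h] at hab ⊢; rw [hab]; simpa using hy
    · have : 0 ≤ b • y := smul_nonneg hb (le_of_lt hy)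
      have : 0 < a • x := smul_pos h hx
      linarith
  have hxx : (0:ℝ) < x := hx
  have hyy : (0:ℝ) < y := hy
  refine le_of_tendsto_of_tendsto'
    (((tendsto_Fn hs hxx).const_smul a).add ((tendsto_Fn hs hyy).const_smul b))
    (tendsto_Fn hs hz) ?_
  intro n
  exact (concave_Fn hs n).2 hx hy ha hb hab

lemma strictConcave_Df {s : ℝ} (hs : 0 < s) : StrictConcaveOn ℝ (Ioi (0:ℝ)) (Df s) := by
  have hkey : ∀ x : ℝ, 0 < x → Df s x = (Real.log x - Real.log (x+s)) + Df s (x+1) := by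
    intro x hx
    have hxs : 0 < x + s := by linarith
    have e1 : lg (x+1) = Real.log x + lg x := lg_add_one hx
    have e2 : lg (x+1+s) = Real.log (x+s) + lg (x+s) := by
      have := lg_add_one hxs
      rw [show x + 1 + s = x + s + 1 by ring, this]
    simp only [Df, e1, e2]; ring
  refine ⟨convex_Ioi 0, ?_⟩
  intro x hx y hy hxy a b ha hb hab
  have hxx : (0:ℝ) < x := hx
  have hyy : (0:ℝ) < y := hy
  have hz : (0:ℝ) < a • x + b • y := by
    have : 0 < a • x := smul_pos ha hxx
    have : 0 ≤ b • y := smul_nonneg hb.le hyy.le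
    linarith
  have h1 : a • (Real.log x - Real.log (x+s)) + b • (Real.log y - Real.log (y+s))
      < Real.log (a • x + b • y) - Real.log ((a • x + b • y) + s) := by
    have := (strictConcave_logdiff (a := 0) (b := s) le_rfl hs).2 hx hy hxy ha hb hab
    simpa using this
  have h2 : a • Df s (x+1) + b • Df s (y+1) ≤ Df s ((a • x + b • y) + 1) := by
    have hx1 : x + 1 ∈ Ioi (0:ℝ) := by simp; linarith
    have hy1 : y + 1 ∈ Ioi (0:ℝ) := by simp; linarith
    have := (concave_Df hs).2 hx1 hy1 ha.le hb.le hab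
    have he : a • (x+1) + b • (y+1) = (a • x + b • y) + 1 := by
      simp only [smul_eq_mul]; nlinarith [hab]
    rwa [he] at this
  rw [hkey _ hz, hkey _ hxx, hkey _ hyy]
  simp only [smul_eq_mul] at *
  nlinarith [h1, h2]

lemma strictMono_Df {s : ℝ} (hs : 0 < s) : StrictMonoOn (Df s) (Ioi (0:ℝ)) := by
  intro x hx y hy hxy
  have hxx : (0:ℝ) < x := hx
  have hyy : (0:ℝ) < y := hy
  have hterm : ∀ n : ℕ, Fn s x n ≤ Fn s y n - (Real.log ((y+0)/(y+0+s)) - Real.log ((x+0)/(x+0+s))) := by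
    intro n
    rw [Fn, Fn]
    have hsum : ∀ j : ℕ, (Real.log (x+j) - Real.log (x+j+s)) ≤ (Real.log (y+j) - Real.log (y+j+s)) := by
      intro j
      have h1 : (0:ℝ) < x + j := by positivity
      have h2 : (0:ℝ) < x + j + s := by positivity
      have h3 : (0:ℝ) < y + j := by linarith
      have h4 : (0:ℝ) < y + j + s := by linarith
      rw [← Real.log_div h1.ne' h2.ne', ← Real.log_div h3.ne' h4.ne']
      apply Real.log_le_log (by positivity)
      rw [div_le_div_iff₀ h2 h4]
      nlinarith
    have hsplit : ∑ j ∈ Finset.range (n+1), (Real.log (x+j) - Real.log (x+j+s))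
        ≤ (∑ j ∈ Finset.range (n+1), (Real.log (y+j) - Real.log (y+j+s)))
          - (Real.log ((y+0)/(y+0+s)) - Real.log ((x+0)/(x+0+s))) := by
      have h0mem : 0 ∈ Finset.range (n+1) := by simp
      rw [← Finset.sum_erase_add _ _ h0mem, ← Finset.sum_erase_add _ _ h0mem]
      have hA : ∑ j ∈ (Finset.range (n+1)).erase 0, (Real.log (x+j) - Real.log (x+j+s))
          ≤ ∑ j ∈ (Finset.range (n+1)).erase 0, (Real.log (y+j) - Real.log (y+j+s)) :=
        Finset.sum_le_sum fun j _ => hsum j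
      have hx0 : Real.log ((x+0)/(x+0+s)) = Real.log (x+(0:ℕ)) - Real.log (x+(0:ℕ)+s) := by
        push_cast
        rw [Real.log_div (by positivity) (by positivity)]
      have hy0 : Real.log ((y+0)/(y+0+s)) = Real.log (y+(0:ℕ)) - Real.log (y+(0:ℕ)+s) := by
        push_cast
        rw [Real.log_div (by positivity) (by linarith : (0:ℝ) < y + 0 + s).ne']
      rw [hx0, hy0]
      push_cast
      linarith
    linarith
  have hgap : Real.log ((x+0)/(x+0+s)) < Real.log ((y+0)/(y+0+s)) := by
    apply Real.log_lt_log (by positivity)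
    rw [div_lt_div_iff₀ (by positivity) (by linarith)]
    nlinarith
  have hle : Df s x ≤ Df s y - (Real.log ((y+0)/(y+0+s)) - Real.log ((x+0)/(x+0+s))) := by
    refine le_of_tendsto_of_tendsto' (tendsto_Fn hs hxx) ((tendsto_Fn hs hyy).sub_const _) hterm
  linarith

/-- strict concave increment comparison -/
lemma incr_lt {f : ℝ → ℝ} (hf : StrictConcaveOn ℝ (Ioi (0:ℝ)) f) {a b t : ℝ}
    (ha : 0 < a) (hb : a < b) (ht : 0 < t) :
    f (b + t) - f b < f (a + t) - f a := by
  have hb0 : 0 < b := ha.trans hb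
  have hat : a + t ∈ Ioi (0:ℝ) := by simp; linarith
  have hbt : b + t ∈ Ioi (0:ℝ) := by simp; linarith
  have ha' : a ∈ Ioi (0:ℝ) := ha
  have hb' : b ∈ Ioi (0:ℝ) := hb0
  -- slope from a: (f(b+t)-f a)/(b+t-a) < (f(a+t)-f a)/t
  have s1 : (f (b+t) - f a)/(b+t-a) < (f (a+t) - f a)/(a+t-a) :=
    hf.secant_strict_mono ha' hat hbt (by linarith : a+t ≠ a) (by linarith : b+t ≠ a)
      (by linarith)
  -- slope to b+t: (f b - f (b+t))/(b-(b+t)) < (f a - f(b+t))/(a-(b+t))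
  have s2 : (f b - f (b+t))/(b-(b+t)) < (f a - f (b+t))/(a-(b+t)) :=
    hf.secant_strict_mono hbt ha' hb' (by linarith : a ≠ b+t) (by linarith : b ≠ b+t)
      (by linarith)
  have e2 : (f b - f (b+t))/(b-(b+t)) = (f (b+t) - f b)/t := by
    rw [show b - (b+t) = -t by ring, div_neg]; ring
  have e3 : (f a - f (b+t))/(a-(b+t)) = (f (b+t) - f a)/(b+t-a) := by
    rw [show a - (b+t) = -(b+t-a) by ring, div_neg]; ring
  rw [e2, e3] at s2
  have : (f (b+t) - f b)/t < (f (a+t) - f a)/t := by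
    calc (f (b+t) - f b)/t < (f (b+t) - f a)/(b+t-a) := s2
    _ < (f (a+t) - f a)/(a+t-a) := s1
    _ = (f (a+t) - f a)/t := by ring_nf
  exact (div_lt_div_iff_of_pos_right ht).mp this

lemma incr_le {f : ℝ → ℝ} (hf : StrictConcaveOn ℝ (Ioi (0:ℝ)) f) {a b t : ℝ}
    (ha : 0 < a) (hb : a ≤ b) (ht : 0 ≤ t) :
    f (b + t) - f b ≤ f (a + t) - f a := by
  rcases eq_or_lt_of_le hb with rfl|hb
  · exact le_rfl
  rcases eq_or_lt_of_le ht with rfl|ht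
  · simp
  exact (incr_lt hf ha hb ht).le

/-- the central comparison function -/
def Phi (s c u : ℝ) : ℝ := -(Df s u) + Df s (1-s-u) - Df s (c+1-s-u) - Df s (c+1-u)

/-- The key monotonicity: `Phi` is strictly decreasing. -/
lemma PhiDec {s c u₁ u₂ : ℝ} (hs : 0 < s) (hs1 : s < 1) (hc : 0 ≤ c)
    (h1 : 0 < u₁) (h12 : u₁ < u₂) (h2 : u₂ < 1 - s) (h3 : 2*u₂ ≤ c+1) :
    Phi s c u₂ < Phi s c u₁ := by
  set h := u₂ - u₁ with hh
  have hhpos : 0 < h := by rw [hh]; linarith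
  have hD := strictConcave_Df hs
  -- I1 : Df(c+1-s-u₁) - Df(c+1-s-u₂) ≤ Df(1-s-u₁) - Df(1-s-u₂)
  have I1 : Df s (c+1-s-u₁) - Df s (c+1-s-u₂) ≤ Df s (1-s-u₁) - Df s (1-s-u₂) := by
    have := incr_le hD (a := 1-s-u₂) (b := c+1-s-u₂) (t := h)
      (by linarith) (by linarith) hhpos.le
    have e1 : 1-s-u₂+h = 1-s-u₁ := by rw [hh]; ring
    have e2 : c+1-s-u₂+h = c+1-s-u₁ := by rw [hh]; ring
    rw [e1, e2] at this
    linarith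
  -- I2 : Df(c+1-u₁) - Df(c+1-u₂) < Df u₂ - Df u₁
  have I2 : Df s (c+1-u₁) - Df s (c+1-u₂) < Df s u₂ - Df s u₁ := by
    have := incr_lt hD (a := u₁) (b := c+1-u₂) (t := h) h1 (by linarith) hhpos
    have e1 : u₁ + h = u₂ := by rw [hh]; ring
    have e2 : c+1-u₂+h = c+1-u₁ := by rw [hh]; ring
    rw [e1, e2] at this
    linarith
  simp only [Phi]
  linarith



/-- the right-hand side function -/
def Rf (s β : ℝ) : ℝ := Real.sin (π*s) * Real.sin (π*(β-2*s)) / (π * Real.sin (π*(β-s)))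
/-- the left-hand side function -/
def Lf (s β : ℝ) : ℝ := Real.Gamma (β+1) / (Real.Gamma (β+1-2*s) * Real.Gamma (2*s))

section Basic
variable {s : ℝ} (hs0 : 0 < s) (hs1 : s < 1)

lemma sin_pi_pos {u : ℝ} (h0 : 0 < u) (h1 : u < 1) : 0 < Real.sin (π*u) :=
  Real.sin_pos_of_pos_of_lt_pi (by positivity) (by nlinarith [Real.pi_pos])

lemma sin_shift (k : ℕ) (u : ℝ) :
    Real.sin (π*((k:ℝ) - u)) = -((-1)^k * Real.sin (π*u)) := by
  rw [show π*((k:ℝ)-u) = (k:ℝ)*π - π*u by ring]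
  exact Real.sin_nat_mul_pi_sub (π*u) k

include hs0 hs1 in
lemma log_sin_pi {u : ℝ} (h0 : 0 < u) (h1 : u < 1) :
    Real.log (Real.sin (π*u)) = Real.log π - (lg u + lg (1-u)) := by
  have hrefl := Real.Gamma_mul_Gamma_one_sub u
  have hΓu : 0 < Real.Gamma u := Real.Gamma_pos_of_pos h0
  have hΓ1u : 0 < Real.Gamma (1-u) := Real.Gamma_pos_of_pos (by linarith)
  have hsin := sin_pi_pos h0 h1
  have hval : Real.sin (π*u) = π / (Real.Gamma u * Real.Gamma (1-u)) := by
    rw [hrefl]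
    field_simp
  rw [hval, Real.log_div Real.pi_pos.ne' (by positivity),
    Real.log_mul hΓu.ne' hΓ1u.ne']
  rfl

lemma Lf_pos {β : ℝ} (h1 : 0 < β+1) (h2 : 0 < β+1-2*s) (h2s : 0 < 2*s) : 0 < Lf s β := by
  have := Real.Gamma_pos_of_pos h1
  have := Real.Gamma_pos_of_pos h2
  have := Real.Gamma_pos_of_pos h2s
  rw [Lf]; positivity

lemma Lf_step {β : ℝ} (h1 : β+1 ≠ 0) (h2 : β+1-2*s ≠ 0) :
    Lf s (β+1) = ((β+1)/(β+1-2*s)) * Lf s β := by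
  rw [Lf, Lf]
  have e1 : β+1+1 = (β+1)+1 := by ring
  have e2 : β+1+1-2*s = (β+1-2*s)+1 := by ring
  rw [e1, e2, Real.Gamma_add_one h1, Real.Gamma_add_one h2]
  field_simp

lemma GammaContAt {x : ℝ} (hx : 0 < x) : ContinuousAt Real.Gamma x := by
  refine (Real.differentiableAt_Gamma fun m => ?_).continuousAt
  have hm : -(m:ℝ) ≤ 0 := neg_nonpos.mpr (Nat.cast_nonneg m)
  intro h; rw [h] at hx; linarith

lemma GammaCompContAt {f : ℝ → ℝ} {x : ℝ} (hf : Continuous f) (h : 0 < f x) :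
    ContinuousAt (fun β : ℝ => Real.Gamma (f β)) x :=
  (GammaContAt h).comp hf.continuousAt

end Basic

section Branch
variable {s : ℝ} (hs0 : 0 < s) (hs1 : s < 1)

-- On the branch `(k-1+2s, k+s)` write `u = k+s-β ∈ (0,1-s)`.
include hs0 hs1

lemma branch_sin1 (k : ℕ) (β : ℝ) :
    Real.sin (π*(β-s)) = -((-1)^k * Real.sin (π*((k:ℝ)+s-β))) := by
  rw [← sin_shift k ((k:ℝ)+s-β)]
  congr 1; ring

lemma branch_sin2 (k : ℕ) (β : ℝ) :
    Real.sin (π*(β-2*s)) = -((-1)^k * Real.sin (π*((k:ℝ)+2*s-β))) := by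
  rw [← sin_shift k ((k:ℝ)+2*s-β)]
  congr 1; ring

lemma Rf_branch (k : ℕ) (β : ℝ) :
    Rf s β = Real.sin (π*s) * Real.sin (π*((k:ℝ)+s-β+s)) / (π * Real.sin (π*((k:ℝ)+s-β))) := by
  have hc : -((-1:ℝ))^k ≠ 0 := by
    simp only [neg_ne_zero]
    exact pow_ne_zero _ (by norm_num)
  calc Rf s β
      = (-(-1:ℝ)^k * (Real.sin (π*s) * Real.sin (π*((k:ℝ)+s-β+s))))
        / (-(-1:ℝ)^k * (π * Real.sin (π*((k:ℝ)+s-β)))) := by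
        rw [Rf, branch_sin1 hs0 hs1 k β, branch_sin2 hs0 hs1 k β,
          show (k:ℝ)+2*s-β = (k:ℝ)+s-β+s by ring]
        congr 1 <;> ring
    _ = _ := mul_div_mul_left _ _ hc

lemma Rf_branch_pos {k : ℕ} {β : ℝ} (hl : (k:ℝ)-1+2*s < β) (hr : β < (k:ℝ)+s) :
    0 < Rf s β := by
  rw [Rf_branch hs0 hs1 k β]
  have h1 : 0 < Real.sin (π*((k:ℝ)+s-β+s)) := sin_pi_pos (by linarith) (by linarith)
  have h2 : 0 < Real.sin (π*((k:ℝ)+s-β)) := sin_pi_pos (by linarith) (by linarith)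
  have h3 : 0 < Real.sin (π*s) := sin_pi_pos hs0 hs1
  positivity

lemma log_Rf_branch {k : ℕ} {β : ℝ} (hl : (k:ℝ)-1+2*s < β) (hr : β < (k:ℝ)+s) :
    Real.log (Rf s β) = Real.log (Real.sin (π*s)) - Real.log π
      + (lg ((k:ℝ)+s-β) + lg (1-((k:ℝ)+s-β)))
      - (lg ((k:ℝ)+s-β+s) + lg (1-((k:ℝ)+s-β)-s)) := by
  set u := (k:ℝ)+s-β with hu
  have hu0 : 0 < u := by rw [hu]; linarith
  have hu1 : u < 1-s := by rw [hu]; linarith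
  have h1 : 0 < Real.sin (π*(u+s)) := sin_pi_pos (by linarith) (by linarith)
  have h2 : 0 < Real.sin (π*u) := sin_pi_pos (by linarith) (by linarith)
  have h3 : 0 < Real.sin (π*s) := sin_pi_pos hs0 hs1
  rw [Rf_branch hs0 hs1 k β, ← hu]
  rw [Real.log_div (by positivity) (by positivity), Real.log_mul h3.ne' h1.ne',
    Real.log_mul Real.pi_pos.ne' h2.ne',
    log_sin_pi hs0 hs1 (by linarith : (0:ℝ) < u) (by linarith),
    log_sin_pi hs0 hs1 (by linarith : (0:ℝ) < u+s) (by linarith),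
    show 1-(u+s) = 1-u-s by ring]
  ring

lemma log_Lf {β : ℝ} (h1 : 0 < β+1) (h2 : 0 < β+1-2*s) :
    Real.log (Lf s β) = lg (β+1) - (lg (β+1-2*s) + lg (2*s)) := by
  have g1 := Real.Gamma_pos_of_pos h1
  have g2 := Real.Gamma_pos_of_pos h2
  have g3 := Real.Gamma_pos_of_pos (by linarith : (0:ℝ) < 2*s)
  rw [Lf, Real.log_div g1.ne' (by positivity), Real.log_mul g2.ne' g3.ne']
  rfl

/-- On the branch, `log Rf - log Lf` is `const + Phi`. -/
lemma W_eq {k : ℕ} {β : ℝ} (hl : (k:ℝ)-1+2*s < β) (hr : β < (k:ℝ)+s) :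
    Real.log (Rf s β) - Real.log (Lf s β)
      = (Real.log (Real.sin (π*s)) - Real.log π + lg (2*s)) + Phi s k ((k:ℝ)+s-β) := by
  have h1 : 0 < β+1 := by
    have : (0:ℝ) ≤ (k:ℝ) := Nat.cast_nonneg k
    nlinarith
  have h2 : 0 < β+1-2*s := by
    have : (0:ℝ) ≤ (k:ℝ) := Nat.cast_nonneg k
    nlinarith
  rw [log_Rf_branch hs0 hs1 hl hr, log_Lf hs0 hs1 h1 h2]
  simp only [Phi, Df]
  rw [show (1:ℝ)-s-((k:ℝ)+s-β)+s = 1-((k:ℝ)+s-β) by ring,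
    show (k:ℝ)+1-s-((k:ℝ)+s-β)+s = β+1-s by ring,
    show (k:ℝ)+1-s-((k:ℝ)+s-β) = β+1-2*s by ring,
    show (k:ℝ)+1-((k:ℝ)+s-β)+s = β+1 by ring,
    show (k:ℝ)+1-((k:ℝ)+s-β) = β+1-s by ring]
  ring

end Branch

section Main
variable {s : ℝ} (hs0 : 0 < s) (hs1 : s < 1)

lemma mul_lt_of_logs {a b c d : ℝ} (ha : 0<a) (hb : 0<b) (hc : 0<c) (hd : 0<d)
    (h : Real.log a - Real.log b < Real.log c - Real.log d) : a*d < c*b := by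
  have h2 : Real.log (a*d) < Real.log (c*b) := by
    rw [Real.log_mul ha.ne' hd.ne', Real.log_mul hc.ne' hb.ne']; linarith
  exact (Real.log_lt_log_iff (by positivity) (by positivity)).mp h2

include hs0 hs1

/-- Strict monotonicity of `Rf/Lf` on a branch, in cross-multiplied form. -/
lemma branch_mono {k : ℕ} {β₁ β₂ : ℝ} (h1l : (k:ℝ)-1+2*s < β₁) (h12 : β₁ < β₂)
    (h2r : β₂ < (k:ℝ)+s) (hhalf : 2*((k:ℝ)+s-β₁) ≤ (k:ℝ)+1) :
    Rf s β₁ * Lf s β₂ < Rf s β₂ * Lf s β₁ := by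
  have h1r : β₁ < (k:ℝ)+s := h12.trans h2r
  have h2l : (k:ℝ)-1+2*s < β₂ := h1l.trans h12
  have hknn : (0:ℝ) ≤ (k:ℝ) := Nat.cast_nonneg k
  have hphi : Phi s k ((k:ℝ)+s-β₁) < Phi s k ((k:ℝ)+s-β₂) :=
    PhiDec hs0 hs1 hknn (by linarith) (by linarith) (by linarith) hhalf
  have hW1 := W_eq hs0 hs1 h1l h1r
  have hW2 := W_eq hs0 hs1 h2l h2r
  have hlt : Real.log (Rf s β₁) - Real.log (Lf s β₁)
      < Real.log (Rf s β₂) - Real.log (Lf s β₂) := by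
    rw [hW1, hW2]; linarith
  exact mul_lt_of_logs (Rf_branch_pos hs0 hs1 h1l h1r)
    (Lf_pos (by nlinarith) (by nlinarith) (by linarith))
    (Rf_branch_pos hs0 hs1 h2l h2r)
    (Lf_pos (by nlinarith) (by nlinarith) (by linarith)) hlt

/-- uniqueness of solutions of `Rf = Lf` on a branch -/
lemma branch_unique {k : ℕ} {β₁ β₂ : ℝ}
    (h1 : β₁ ∈ Ioo ((k:ℝ)-1+2*s) ((k:ℝ)+s)) (h2 : β₂ ∈ Ioo ((k:ℝ)-1+2*s) ((k:ℝ)+s))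
    (hhalf1 : 2*((k:ℝ)+s-β₁) ≤ (k:ℝ)+1) (hhalf2 : 2*((k:ℝ)+s-β₂) ≤ (k:ℝ)+1)
    (e1 : Rf s β₁ = Lf s β₁) (e2 : Rf s β₂ = Lf s β₂) : β₁ = β₂ := by
  rcases lt_trichotomy β₁ β₂ with h|h|h
  · exfalso
    have := branch_mono hs0 hs1 h1.1 h h2.2 hhalf1
    rw [e1, e2] at this
    rw [mul_comm] at this
    exact this.ne rfl
  · exact h
  · exfalso
    have := branch_mono hs0 hs1 h2.1 h h1.2 hhalf2
    rw [mul_comm] at this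
    rw [e1, e2] at this
    exact this.ne rfl

end Main


section Exist
variable {s : ℝ} (hs0 : 0 < s) (hs1 : s < 1)
include hs0 hs1

lemma tendsto_RfLf (k : ℕ) :
    Tendsto (fun β => Rf s β - Lf s β) (𝓝[<] ((k:ℝ)+s)) atTop := by
  have hsin_s : 0 < Real.sin (π*s) := sin_pi_pos hs0 hs1
  have hN : Tendsto (fun β => Real.sin (π*s) * Real.sin (π*((k:ℝ)+2*s-β)) / π)
      (𝓝[<] ((k:ℝ)+s)) (𝓝 (Real.sin (π*s) * Real.sin (π*s) / π)) := by
    apply Tendsto.mono_left ?_ nhdsWithin_le_nhds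
    have hcont : Continuous fun β : ℝ => Real.sin (π*s) * Real.sin (π*((k:ℝ)+2*s-β)) / π := by
      fun_prop
    have := hcont.tendsto ((k:ℝ)+s)
    simpa [show (k:ℝ)+2*s-((k:ℝ)+s) = s by ring] using this
  have hpos : 0 < Real.sin (π*s) * Real.sin (π*s) / π := by
    have := Real.pi_pos; positivity
  have hg : Tendsto (fun β => Real.sin (π*((k:ℝ)+s-β))) (𝓝[<] ((k:ℝ)+s)) (𝓝[>] 0) := by
    rw [tendsto_nhdsWithin_iff]
    constructor
    · apply Tendsto.mono_left ?_ nhdsWithin_le_nhds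
      have hcont : Continuous fun β : ℝ => Real.sin (π*((k:ℝ)+s-β)) := by fun_prop
      have := hcont.tendsto ((k:ℝ)+s)
      simpa using this
    · filter_upwards [Ioo_mem_nhdsLT
        (show (k:ℝ)+s-1 < (k:ℝ)+s by linarith)] with β hβ
      exact sin_pi_pos (by simp at hβ; linarith [hβ.2]) (by simp at hβ; linarith [hβ.1])
  have hinv : Tendsto (fun β => (Real.sin (π*((k:ℝ)+s-β)))⁻¹) (𝓝[<] ((k:ℝ)+s)) atTop :=
    tendsto_inv_nhdsGT_zero.comp hg
  have hRf : Tendsto (fun β => Rf s β) (𝓝[<] ((k:ℝ)+s)) atTop := by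
    refine (Tendsto.pos_mul_atTop hpos hN hinv).congr' ?_
    filter_upwards [Ioo_mem_nhdsLT (show (k:ℝ)-1+2*s < (k:ℝ)+s by linarith)]
      with β hβ
    rw [Rf_branch hs0 hs1 k β, show (k:ℝ)+s-β+s = (k:ℝ)+2*s-β by ring]
    ring
  have hLf : Tendsto (fun β => Lf s β) (𝓝[<] ((k:ℝ)+s)) (𝓝 (Lf s ((k:ℝ)+s))) := by
    apply Tendsto.mono_left ?_ nhdsWithin_le_nhds
    apply ContinuousAt.tendsto
    have hknn : (0:ℝ) ≤ (k:ℝ) := Nat.cast_nonneg k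
    have h1 : ContinuousAt (fun β : ℝ => Real.Gamma (β+1)) ((k:ℝ)+s) :=
      GammaCompContAt (by fun_prop) (by linarith : (0:ℝ) < (k:ℝ)+s+1)
    have h2 : ContinuousAt (fun β : ℝ => Real.Gamma (β+1-2*s)) ((k:ℝ)+s) :=
      GammaCompContAt (by fun_prop) (by linarith : (0:ℝ) < (k:ℝ)+s+1-2*s)
    have hden : Real.Gamma ((k:ℝ)+s+1-2*s) * Real.Gamma (2*s) ≠ 0 := by
      have := Real.Gamma_pos_of_pos (show (0:ℝ) < (k:ℝ)+s+1-2*s by linarith)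
      have := Real.Gamma_pos_of_pos (show (0:ℝ) < 2*s by linarith)
      positivity
    exact ContinuousAt.div h1 (h2.mul continuousAt_const) hden
  have := hRf.atTop_add hLf.neg
  refine this.congr ?_
  intro β; ring

lemma Lf_zero_eq (h2s : 2*s < 1) : Lf s 0 = Real.sin (π*(2*s)) / π := by
  have hrefl := Real.Gamma_mul_Gamma_one_sub (2*s)
  have hsin2 : 0 < Real.sin (π*(2*s)) := sin_pi_pos (by linarith) (by linarith)
  rw [Lf, show (0:ℝ)+1 = 1 by ring, Real.Gamma_one,
    mul_comm (Real.Gamma (1-2*s)) (Real.Gamma (2*s)), hrefl, one_div_div]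

lemma Lf_nat_lt (h2s : 2*s < 1) : ∀ k : ℕ, 1 ≤ k → Lf s 0 < Lf s k := by
  have hL0 : 0 < Lf s 0 :=
    Lf_pos (by linarith) (by linarith) (by linarith)
  intro k hk
  induction k with
  | zero => omega
  | succ n ih =>
    have hn1 : (0:ℝ) < (n:ℝ)+1 := by positivity
    have hn2 : (0:ℝ) < (n:ℝ)+1-2*s := by
      have : (0:ℝ) ≤ (n:ℝ) := Nat.cast_nonneg n
      linarith
    have hstep : Lf s ((n:ℝ)+1) = (((n:ℝ)+1)/((n:ℝ)+1-2*s)) * Lf s n :=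
      Lf_step hn1.ne' hn2.ne'
    have hfac : 1 < ((n:ℝ)+1)/((n:ℝ)+1-2*s) := by
      rw [lt_div_iff₀ hn2]; linarith
    have hcast : ((n+1 : ℕ):ℝ) = (n:ℝ)+1 := by push_cast; ring
    rcases Nat.eq_zero_or_pos n with rfl|hn
    · rw [hcast, hstep]
      simp only [Nat.cast_zero] at *
      nlinarith
    · have hLn := ih hn
      have hLnpos : 0 < Lf s n := hL0.trans hLn
      rw [hcast, hstep]
      nlinarith

lemma exists_sol (k : ℕ) (hk : 1 ≤ k) :
    ∃ β ∈ Ioo ((k:ℝ) + max (2*s-1) 0) ((k:ℝ)+s), Rf s β = Lf s β := by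
  have hk1 : (1:ℝ) ≤ (k:ℝ) := by exact_mod_cast hk
  set a := (k:ℝ) + max (2*s-1) 0 with ha
  have hma : (2*s-1) ≤ max (2*s-1) 0 := le_max_left _ _
  have hma0 : (0:ℝ) ≤ max (2*s-1) 0 := le_max_right _ _
  have hbl : (k:ℝ)-1+2*s ≤ a := by rw [ha]; linarith
  have har : a < (k:ℝ)+s := by
    rw [ha]
    have h1 : max (2*s-1) 0 < s := max_lt (by linarith) hs0
    linarith
  have hLa : 0 < Lf s a :=
    Lf_pos (by linarith) (by linarith) (by linarith)
  have hRa : Rf s a < Lf s a := by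
    rcases le_or_gt (2*s-1) 0 with hcase|hcase
    · have hmax : max (2*s-1) 0 = 0 := max_eq_right hcase
      have haeq : a = (k:ℝ) := by rw [ha, hmax, add_zero]
      have e1 : Real.sin (π*((k:ℝ)-2*s)) = -((-1)^k * Real.sin (π*(2*s))) := sin_shift (k := k) (2*s)
      have e2 : Real.sin (π*((k:ℝ)-s)) = -((-1)^k * Real.sin (π*s)) := sin_shift (k := k) s
      have hss : Real.sin (π*s) ≠ 0 := (sin_pi_pos hs0 hs1).ne'
      have hc : ((-1:ℝ))^k ≠ 0 := pow_ne_zero _ (by norm_num)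
      have hRk : Rf s (k:ℝ) = Real.sin (π*(2*s)) / π := by
        rw [Rf, e1, e2]
        field_simp
      rw [haeq, hRk]
      have hLk : 0 < Lf s (k:ℝ) :=
        Lf_pos (by linarith) (by linarith) (by linarith)
      rcases eq_or_lt_of_le hcase with heq|hlt2
      · have hs2 : 2*s = 1 := by linarith
        rw [hs2]
        simpa [Real.sin_pi] using hLk
      · rw [← Lf_zero_eq hs0 hs1 (by linarith)]
        exact Lf_nat_lt hs0 hs1 (by linarith) k hk
    · have hmax : max (2*s-1) 0 = 2*s-1 := max_eq_left (by linarith)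
      have haeq : a = (k:ℝ)+2*s-1 := by rw [ha, hmax]; ring
      have hRa0 : Rf s a = 0 := by
        have e0 : a-2*s = (k:ℝ)-1 := by rw [haeq]; ring
        have : Real.sin (π*(a-2*s)) = 0 := by
          rw [e0, show π*((k:ℝ)-1) = π*(k:ℝ) - π*1 by ring]
          rcases Nat.eq_zero_or_pos k with rfl|hkpos
          · norm_num at hk1
          · obtain ⟨m, rfl⟩ := Nat.exists_eq_succ_of_ne_zero hkpos.ne'
            push_cast
            rw [show π*((m:ℝ)+1) - π*1 = (m:ℝ)*π by ring]
            exact Real.sin_int_mul_pi m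
        rw [Rf, this]
        simp
      rw [hRa0]; exact hLa
  obtain ⟨x1, hx1mem, hx1val⟩ : ∃ x1, x1 ∈ Ioo a ((k:ℝ)+s) ∧ 0 < Rf s x1 - Lf s x1 := by
    have hev1 := (tendsto_RfLf hs0 hs1 k).eventually_gt_atTop 0
    have hev2 : ∀ᶠ β in 𝓝[<]((k:ℝ)+s), β ∈ Ioo a ((k:ℝ)+s) := Ioo_mem_nhdsLT har
    obtain ⟨x1, hv, hm⟩ := (hev1.and hev2).exists
    exact ⟨x1, hm, hv⟩
  have hx1lt : a < x1 := hx1mem.1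
  have hcont : ContinuousOn (fun β => Rf s β - Lf s β) (Icc a x1) := by
    have hsub : Icc a x1 ⊆ Ioc ((k:ℝ)+s-1) ((k:ℝ)+s) := by
      intro β hβ
      constructor
      · have := hβ.1; linarith [max_lt (show 2*s-1 < s by linarith) hs0]
      · linarith [hβ.2, hx1mem.2]
    apply ContinuousOn.sub
    · apply ContinuousOn.div (by fun_prop) (by fun_prop)
      intro β hβ
      obtain ⟨hβ1, hβ2⟩ := hsub hβ
      have hu0 : 0 < (k:ℝ)+s-β := by
        rcases lt_or_eq_of_le hβ2 with h|h
        · linarith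
        · exfalso; rw [h] at hβ; linarith [hβ.2, hx1mem.2]
      have hu1 : (k:ℝ)+s-β < 1 := by linarith
      have := branch_sin1 hs0 hs1 k β
      rw [this]
      have hsu := sin_pi_pos hu0 hu1
      have hc : ((-1:ℝ))^k ≠ 0 := pow_ne_zero _ (by norm_num)
      have hpi := Real.pi_pos
      intro hcontra
      rcases mul_eq_zero.mp hcontra with h'|h'
      · exact hpi.ne' h'
      · rw [neg_eq_zero] at h'
        rcases mul_eq_zero.mp h' with h''|h''
        · exact hc h''
        · exact hsu.ne' h''
    · intro β hβ
      have hβ1 : 0 < β + 1 := by have := hβ.1; linarith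
      have hβ2 : 0 < β + 1 - 2*s := by have := hβ.1; linarith
      apply ContinuousAt.continuousWithinAt
      have h1 : ContinuousAt (fun β : ℝ => Real.Gamma (β+1)) β :=
        GammaCompContAt (by fun_prop) hβ1
      have h2 : ContinuousAt (fun β : ℝ => Real.Gamma (β+1-2*s)) β :=
        GammaCompContAt (by fun_prop) hβ2
      have hden : Real.Gamma (β+1-2*s) * Real.Gamma (2*s) ≠ 0 := by
        have := Real.Gamma_pos_of_pos hβ2
        have := Real.Gamma_pos_of_pos (show (0:ℝ) < 2*s by linarith)
        positivity
      exact ContinuousAt.div h1 (h2.mul continuousAt_const) hden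
  have hmem0 : (0:ℝ) ∈ Ioo (Rf s a - Lf s a) (Rf s x1 - Lf s x1) :=
    ⟨by linarith, hx1val⟩
  obtain ⟨c, hc, hceq⟩ := intermediate_value_Ioo hx1lt.le hcont hmem0
  have hceq' : Rf s c - Lf s c = 0 := hceq
  refine ⟨c, ⟨hc.1, lt_trans hc.2 hx1mem.2⟩, by linarith⟩

end Exist


/-- auxiliary function for the limit at `β → (2s-1)⁺` -/
def Hf (s w : ℝ) : ℝ :=
  Real.sin (π*s) * Real.sin (π*w) * Real.Gamma (w+1) * Real.Gamma (2*s)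
    / (π * w * Real.sin (π*(w+s)) * Real.Gamma (w+2*s))

section KZero

lemma sinc_tendsto : Tendsto (fun w : ℝ => Real.sin (π*w)/(π*w)) (𝓝[>] 0) (𝓝 1) := by
  have hd : HasDerivAt (fun w : ℝ => Real.sin (π*w)) π 0 := by
    have h1 : HasDerivAt (fun w : ℝ => π*w) π 0 := by
      simpa using (hasDerivAt_id (0:ℝ)).const_mul π
    have h2 := (Real.hasDerivAt_sin (π*0)).comp 0 h1
    simpa [Function.comp_def] using h2
  have hslope := hasDerivAt_iff_tendsto_slope.mp hd
  have hslope' : Tendsto (slope (fun w : ℝ => Real.sin (π*w)) 0) (𝓝[>] 0) (𝓝 π) :=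
    hslope.mono_left (nhdsWithin_mono 0 fun x hx => by simp at hx ⊢; exact hx.ne')
  have hdiv := hslope'.div_const π
  rw [div_self Real.pi_pos.ne'] at hdiv
  refine hdiv.congr fun w => ?_
  rw [slope_def_field]
  field_simp
  simp

lemma Hf_tendsto {s : ℝ} (hs0 : 0 < s) (hs1 : s < 1) :
    Tendsto (Hf s) (𝓝[>] 0) (𝓝 1) := by
  have hsinπs : 0 < Real.sin (π*s) := sin_pi_pos hs0 hs1
  have hΓ2s : 0 < Real.Gamma (2*s) := Real.Gamma_pos_of_pos (by linarith)
  have hrest : Tendsto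
      (fun w : ℝ => Real.sin (π*s) * Real.Gamma (w+1) * Real.Gamma (2*s)
        / (Real.sin (π*(w+s)) * Real.Gamma (w+2*s))) (𝓝[>] 0)
      (𝓝 (Real.sin (π*s) * Real.Gamma (0+1) * Real.Gamma (2*s)
        / (Real.sin (π*(0+s)) * Real.Gamma (0+2*s)))) := by
    apply Tendsto.mono_left ?_ nhdsWithin_le_nhds
    apply ContinuousAt.tendsto
    apply ContinuousAt.div
    · exact ((continuousAt_const.mul (GammaCompContAt (by fun_prop) (by norm_num))).mul
        continuousAt_const)
    · exact (Continuous.continuousAt (by fun_prop)).mul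
        (GammaCompContAt (by fun_prop) (by linarith : (0:ℝ) < 0+2*s))
    · have h1 : Real.sin (π*((0:ℝ)+s)) = Real.sin (π*s) := by norm_num
      have h2 : (0:ℝ)+2*s = 2*s := by ring
      rw [h1, h2]
      positivity
  have hval : Real.sin (π*s) * Real.Gamma (0+1) * Real.Gamma (2*s)
      / (Real.sin (π*(0+s)) * Real.Gamma (0+2*s)) = 1 := by
    rw [show ((0:ℝ)+1) = 1 by ring, Real.Gamma_one, show π*((0:ℝ)+s) = π*s by ring,
      show ((0:ℝ)+2*s) = 2*s by ring]
    field_simp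
  rw [hval] at hrest
  have hmul := (sinc_tendsto).mul hrest
  rw [mul_one] at hmul
  refine hmul.congr' ?_
  filter_upwards [self_mem_nhdsWithin] with w hw
  have hw0 : (0:ℝ) < w := hw
  rw [Hf]
  field_simp

/-- On `(2s-1, s)` the quotient `Rf/Lf` equals `Hf (β+1-2s)`. -/
lemma ratio_eq {s : ℝ} (hs0 : 0 < s) (hs1 : s < 1) (h2s : 1 ≤ 2*s) {β : ℝ}
    (hl : 2*s-1 < β) (hr : β < s) :
    Rf s β / Lf s β = Hf s (β+1-2*s) := by
  have hw0 : 0 < β+1-2*s := by linarith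
  have hw1 : β+1-2*s < 1-s := by linarith
  have hws : β+1-s < 1 := by linarith
  have hβ1 : 0 < β+1 := by linarith
  have hΓ1 := Real.Gamma_pos_of_pos hβ1
  have hΓw := Real.Gamma_pos_of_pos hw0
  have hΓ2s := Real.Gamma_pos_of_pos (show (0:ℝ) < 2*s by linarith)
  have hsinw : 0 < Real.sin (π*(β+1-2*s)) := sin_pi_pos hw0 (by linarith)
  have hsinws : 0 < Real.sin (π*(β+1-2*s+s)) := sin_pi_pos (by linarith) (by linarith)
  have e1 : Real.sin (π*(β-2*s)) = -Real.sin (π*(β+1-2*s)) := by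
    rw [show π*(β-2*s) = π*(β+1-2*s) - π by ring, Real.sin_sub_pi]
  have e2 : Real.sin (π*(β-s)) = -Real.sin (π*(β+1-2*s+s)) := by
    rw [show π*(β-s) = π*(β+1-2*s+s) - π by ring, Real.sin_sub_pi]
  have e3 : Real.Gamma (β+1-2*s+1) = (β+1-2*s) * Real.Gamma (β+1-2*s) :=
    Real.Gamma_add_one hw0.ne'
  have e4 : β+1-2*s+2*s = β+1 := by ring
  rw [Rf, Lf, Hf, e1, e2, e3, e4]
  have hsws := hsinws.ne'
  have hpi := Real.pi_pos.ne'
  have hw := hw0.ne'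
  generalize Real.sin (π*(β+1-2*s+s)) = B at hsws ⊢
  generalize β+1-2*s = w at hw ⊢
  field_simp

end KZero


section NoSolZero
variable {s : ℝ} (hs0 : 0 < s) (hs1 : s < 1)
include hs0 hs1

lemma RL_zero (h2s : 2*s < 1) : Rf s 0 = Lf s 0 := by
  have hss : Real.sin (π*s) ≠ 0 := (sin_pi_pos hs0 hs1).ne'
  rw [Rf, Lf_zero_eq hs0 hs1 h2s, show π*((0:ℝ)-2*s) = -(π*(2*s)) by ring, Real.sin_neg,
    show π*((0:ℝ)-s) = -(π*s) by ring, Real.sin_neg]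
  field_simp

/-- no solutions in `(0,s)` when `2s < 1` -/
lemma no_sol_zero_lt (h2s : 2*s < 1) {β : ℝ} (hβ0 : 0 < β) (hβs : β < s) :
    Lf s β < Rf s β := by
  have h0 : ((0:ℕ):ℝ)-1+2*s < 0 := by push_cast; linarith
  have hmono := branch_mono hs0 hs1 (k := 0) (β₁ := 0) (β₂ := β)
    (by push_cast; linarith) hβ0 (by push_cast; linarith) (by push_cast; linarith)
  rw [RL_zero hs0 hs1 h2s] at hmono
  have hL0 : 0 < Lf s 0 := Lf_pos (by linarith) (by linarith) (by linarith)
  rw [mul_comm (Lf s 0) (Lf s β)] at hmono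
  exact (mul_lt_mul_iff_left₀ hL0).mp hmono

/-- no solutions in `(2s-1,s)` when `1 ≤ 2s` -/
lemma no_sol_zero_ge (h2s : 1 ≤ 2*s) {β : ℝ} (hβ0 : 2*s-1 < β) (hβs : β < s) :
    Lf s β < Rf s β := by
  set β'' := (2*s-1+β)/2 with hβ''
  have h1 : 2*s-1 < β'' := by rw [hβ'']; linarith
  have h2 : β'' < β := by rw [hβ'']; linarith
  have hLβ : 0 < Lf s β := Lf_pos (by linarith) (by linarith) (by linarith)
  have hLβ'' : 0 < Lf s β'' := Lf_pos (by linarith) (by linarith) (by linarith)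
  have hRβ'' : 0 < Rf s β'' :=
    Rf_branch_pos hs0 hs1 (k := 0) (by push_cast; linarith) (by push_cast; linarith)
  -- mono on branch 0 (with the u ≤ 1/2 condition from 1 ≤ 2s)
  have hmono : ∀ β₁ β₂, 2*s-1 < β₁ → β₁ < β₂ → β₂ < s →
      Rf s β₁ * Lf s β₂ < Rf s β₂ * Lf s β₁ := by
    intro β₁ β₂ ha hb hc
    exact branch_mono hs0 hs1 (k := 0) (by push_cast; linarith) hb
      (by push_cast; linarith) (by push_cast; linarith)
  -- limit: ratio → 1 at (2s-1)⁺
  have hwmap : Tendsto (fun β' : ℝ => β'+1-2*s) (𝓝[>] (2*s-1)) (𝓝[>] 0) := by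
    rw [tendsto_nhdsWithin_iff]
    constructor
    · apply Tendsto.mono_left ?_ nhdsWithin_le_nhds
      have : Continuous fun β' : ℝ => β'+1-2*s := by fun_prop
      have := this.tendsto (2*s-1)
      simpa using this
    · filter_upwards [self_mem_nhdsWithin] with β' hβ'
      simp only [mem_Ioi] at hβ' ⊢
      linarith
  have hT : Tendsto (fun β' => Rf s β' / Lf s β') (𝓝[>] (2*s-1)) (𝓝 1) := by
    refine ((Hf_tendsto hs0 hs1).comp hwmap).congr' ?_
    filter_upwards [Ioo_mem_nhdsGT (show 2*s-1 < β'' by linarith)] with γ hγ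
    exact (ratio_eq hs0 hs1 h2s hγ.1 (by linarith [hγ.2] : γ < s)).symm
  have hle : 1 ≤ Rf s β'' / Lf s β'' := by
    refine le_of_tendsto hT ?_
    filter_upwards [Ioo_mem_nhdsGT (show 2*s-1 < β'' by linarith)] with γ hγ
    have := hmono γ β'' hγ.1 hγ.2 (by linarith)
    rw [div_le_div_iff₀ (Lf_pos (by linarith [hγ.1]) (by linarith [hγ.1]) (by linarith)) hLβ'']
    nlinarith
  have hlt : Rf s β'' * Lf s β < Rf s β * Lf s β'' := hmono β'' β h1 h2 hβs
  have h1le : Lf s β'' ≤ Rf s β'' := by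
    have := (le_div_iff₀ hLβ'').mp hle
    linarith
  nlinarith [hlt, mul_le_mul_of_nonneg_right h1le hLβ.le, hLβ'']

end NoSolZero


end ExpAux

end

noncomputable section

namespace ExpAux
section Classify
variable {s : ℝ} (hs0 : 0 < s) (hs1 : s < 1)
include hs0 hs1

/-- equivalence of (E) with `Rf = Lf`. -/
lemma equivRL {β : ℝ} (hS1 : Real.sin (π*(β-s)) ≠ 0) (hS2 : Real.sin (π*(β-2*s)) ≠ 0)
    (h3 : 0 < β+1) (h4 : 0 < β+1-2*s) : SolE s β ↔ Rf s β = Lf s β := by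
  have hG1 := Real.Gamma_pos_of_pos h3
  have hG4 := Real.Gamma_pos_of_pos h4
  have hG2s := Real.Gamma_pos_of_pos (by linarith : (0:ℝ) < 2*s)
  have hsin' : Real.sin (π*(2*s-β)) = -Real.sin (π*(β-2*s)) := by
    rw [show π*(2*s-β) = -(π*(β-2*s)) by ring, Real.sin_neg]
  have hS2' : Real.sin (π*(2*s-β)) ≠ 0 := by rw [hsin']; simpa using hS2
  have hrefl := Real.Gamma_mul_Gamma_one_sub (2*s-β)
  rw [show (1:ℝ)-(2*s-β) = β+1-2*s by ring] at hrefl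
  have hΓval : Real.Gamma (2*s-β)
      = π / (Real.sin (π*(2*s-β)) * Real.Gamma (β+1-2*s)) := by
    rw [eq_div_iff (mul_ne_zero hS2' hG4.ne')]
    rw [eq_div_iff hS2'] at hrefl
    linear_combination hrefl
  rw [SolE, hΓval, Rf, Lf]
  rw [div_eq_div_iff (by
        intro h
        rcases mul_eq_zero.mp h with h'|h'
        · exact Real.pi_pos.ne' h'
        · exact hS1 h') (by positivity)]
  constructor
  · intro h
    have h' := h
    field_simp at h'
    linear_combination (-1 : ℝ) * h' + (Real.sin (π*s) * Real.Gamma (β+1-2*s) * Real.Gamma (2*s)) * hsin'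
  · intro h
    field_simp
    linear_combination (-1 : ℝ) * h + (Real.sin (π*s) * Real.Gamma (β+1-2*s) * Real.Gamma (2*s)) * hsin'


lemma not_solE_sin1 {β : ℝ} (h : Real.sin (π*(β-s)) = 0) : ¬ SolE s β := by
  rw [SolE, h, mul_zero]
  have h1 := sin_pi_pos hs0 hs1
  have h2 := Real.Gamma_pos_of_pos (show (0:ℝ) < 2*s by linarith)
  intro hc
  nlinarith

lemma not_solE_gamma {β : ℝ} (h : Real.Gamma (2*s-β) = 0) : ¬ SolE s β := by
  rw [SolE, h, mul_zero, zero_mul]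
  have h1 := sin_pi_pos hs0 hs1
  have h2 := Real.Gamma_pos_of_pos (show (0:ℝ) < 2*s by linarith)
  intro hc
  nlinarith

/-- `Rf` is negative on the lower part `(k-1+s, k-1+2s)` of a period. -/
lemma Rf_neg_lower {k : ℕ} {β : ℝ} (hl : (k:ℝ)-1+s < β) (hr : β < (k:ℝ)-1+2*s) :
    Rf s β < 0 := by
  have hu0 : 1-s < (k:ℝ)+s-β := by linarith
  have hu1 : (k:ℝ)+s-β < 1 := by linarith
  have hS1 : 0 < Real.sin (π*((k:ℝ)+s-β)) := sin_pi_pos (by linarith) hu1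
  have hS2 : Real.sin (π*((k:ℝ)+s-β+s)) < 0 := by
    rw [show π*((k:ℝ)+s-β+s) = π*((k:ℝ)+s-β+s-1) + π by ring, Real.sin_add_pi]
    have := sin_pi_pos (show (0:ℝ) < (k:ℝ)+s-β+s-1 by linarith)
      (show (k:ℝ)+s-β+s-1 < 1 by linarith)
    linarith
  rw [Rf_branch hs0 hs1 k β]
  apply div_neg_of_neg_of_pos
  · have := sin_pi_pos hs0 hs1
    nlinarith
  · have := Real.pi_pos
    positivity

/-- equivalence hypotheses hold on a branch -/
lemma equiv_on_branch {k : ℕ} {β : ℝ} (hl : (k:ℝ)-1+2*s < β) (hr : β < (k:ℝ)+s) :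
    SolE s β ↔ Rf s β = Lf s β := by
  have hknn : (0:ℝ) ≤ (k:ℝ) := Nat.cast_nonneg k
  have hu0 : 0 < (k:ℝ)+s-β := by linarith
  have hu1 : (k:ℝ)+s-β < 1-s := by linarith
  have hc : ((-1:ℝ))^k ≠ 0 := pow_ne_zero _ (by norm_num)
  have hS1 : Real.sin (π*(β-s)) ≠ 0 := by
    rw [branch_sin1 hs0 hs1 k β]
    have := sin_pi_pos hu0 (by linarith)
    intro hcon
    rw [neg_eq_zero] at hcon
    rcases mul_eq_zero.mp hcon with h'|h'
    · exact hc h'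
    · exact this.ne' h'
  have hS2 : Real.sin (π*(β-2*s)) ≠ 0 := by
    rw [branch_sin2 hs0 hs1 k β]
    have := sin_pi_pos (show (0:ℝ) < (k:ℝ)+2*s-β by linarith)
      (show (k:ℝ)+2*s-β < 1 by linarith)
    intro hcon
    rw [neg_eq_zero] at hcon
    rcases mul_eq_zero.mp hcon with h'|h'
    · exact hc h'
    · exact this.ne' h'
  exact equivRL hs0 hs1 hS1 hS2 (by nlinarith) (by nlinarith)

/-- classification: any solution above `β₀` lies on a branch with `k ≥ 1`. -/
lemma classify {β : ℝ} (hβ : max (2*s-1) 0 < β) (hE : SolE s β) :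
    ∃ k : ℕ, 1 ≤ k ∧ (k:ℝ)-1+2*s < β ∧ β < (k:ℝ)+s := by
  have hma : (2*s-1) ≤ max (2*s-1) 0 := le_max_left _ _
  have hma0 : (0:ℝ) ≤ max (2*s-1) 0 := le_max_right _ _
  have hβ0 : 0 < β := lt_of_le_of_lt hma0 hβ
  have hS1 : Real.sin (π*(β-s)) ≠ 0 := fun h => not_solE_sin1 hs0 hs1 h hE
  set n : ℤ := ⌊β - s⌋ with hn
  have hn1 : (n:ℝ) ≤ β-s := Int.floor_le _
  have hn2 : β-s < n+1 := Int.lt_floor_add_one _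
  have hne : (n:ℝ) ≠ β-s := by
    intro h
    apply hS1
    rw [← h, mul_comm]
    exact Real.sin_int_mul_pi n
  have hn1' : (n:ℝ) < β-s := lt_of_le_of_ne hn1 hne
  have hnm1 : (-1:ℤ) ≤ n := by
    rw [hn]
    apply Int.le_floor.mpr
    push_cast
    linarith
  rcases eq_or_lt_of_le hnm1 with heq|hpos
  · -- n = -1 : β < s, the k=0 region
    exfalso
    have hβs : β < s := by
      have : ((-1:ℤ):ℝ) = (n:ℝ) := by rw [heq]
      push_cast at this
      linarith [hn2, this]
    rcases le_or_gt 1 (2*s) with hcase|hcase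
    · have := no_sol_zero_ge hs0 hs1 hcase (by linarith) hβs
      have heqv := equiv_on_branch hs0 hs1 (k := 0) (β := β) (by push_cast; linarith)
        (by push_cast; linarith)
      rw [heqv] at hE
      linarith [hE.le]
    · have := no_sol_zero_lt hs0 hs1 hcase hβ0 hβs
      have heqv := equiv_on_branch hs0 hs1 (k := 0) (β := β) (by push_cast; linarith)
        (by push_cast; linarith)
      rw [heqv] at hE
      linarith [hE.le]
  · -- n ≥ 0
    have hn0 : 0 ≤ n := by omega
    set k : ℕ := n.toNat + 1 with hk
    have hkr : (k:ℝ) = (n:ℝ) + 1 := by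
      have h := Int.toNat_of_nonneg hn0
      rw [hk]
      exact_mod_cast congrArg (fun z : ℤ => (z:ℝ)+1) h
    have hbl : (k:ℝ)-1+s < β := by rw [hkr]; linarith
    have hbr : β < (k:ℝ)+s := by rw [hkr]; linarith
    refine ⟨k, by omega, ?_, hbr⟩
    have hk1 : 1 ≤ k := by omega
    have hk1R : (1:ℝ) ≤ (k:ℝ) := by exact_mod_cast hk1
    rcases lt_trichotomy β ((k:ℝ)-1+2*s) with hlt|heq2|hgt
    · exfalso
      have hneg := Rf_neg_lower hs0 hs1 hbl hlt
      have hS2 : Real.sin (π*(β-2*s)) ≠ 0 := by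
        rw [branch_sin2 hs0 hs1 k β]
        have hx1 : (1:ℝ) < (k:ℝ)+2*s-β := by linarith
        have hx2 : (k:ℝ)+2*s-β < 1+s := by linarith
        have hsneg : Real.sin (π*((k:ℝ)+2*s-β)) < 0 := by
          rw [show π*((k:ℝ)+2*s-β) = π*((k:ℝ)+2*s-β-1) + π by ring, Real.sin_add_pi]
          have := sin_pi_pos (by linarith : (0:ℝ) < (k:ℝ)+2*s-β-1) (by linarith)
          linarith
        have hc : ((-1:ℝ))^k ≠ 0 := pow_ne_zero _ (by norm_num)
        intro hcon; rw [neg_eq_zero] at hcon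
        rcases mul_eq_zero.mp hcon with h'|h'
        · exact hc h'
        · exact hsneg.ne h'
      have heqv := equivRL hs0 hs1 hS1 hS2 (by linarith) (by linarith)
      rw [heqv] at hE
      have hLpos : 0 < Lf s β := Lf_pos (by linarith) (by linarith) (by linarith)
      rw [hE] at hneg
      linarith
    · exfalso
      have hcast : ((k-1:ℕ):ℝ) = (k:ℝ)-1 := by
        push_cast [Nat.cast_sub hk1]
        ring
      have hγ : Real.Gamma (2*s-β) = 0 := by
        rw [show 2*s-β = -(((k-1:ℕ)):ℝ) from by rw [hcast]; linear_combination -heq2]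
        exact Real.Gamma_neg_nat_eq_zero (k-1)
      exact not_solE_gamma hs0 hs1 hγ hE
    · exact hgt

end Classify


section Per
variable {s : ℝ} (hs0 : 0 < s) (hs1 : s < 1)

lemma Rf_per (β : ℝ) : Rf s (β+1) = Rf s β := by
  rw [Rf, Rf, show π*(β+1-2*s) = π*(β-2*s)+π by ring, Real.sin_add_pi,
    show π*(β+1-s) = π*(β-s)+π by ring, Real.sin_add_pi, mul_neg, mul_neg, neg_div_neg_eq]

end Per

end ExpAux

end

open ExpAux in
/-- **Lemma 2.6, structure of the solutions of equation (E).**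
Let `s ∈ (0,1)` and `β₀ = max(2s-1,0)`.  Then `β = 0` and `β = 2s-1` solve (E); the
solutions of (E) in `(β₀,∞)` form an increasing sequence `β₁ < β₂ < ⋯ → ∞` with `β_k`
the unique solution in `(k+β₀, k+s)` (`k ≥ 1`) and no other solutions; moreover
`β_{k+1} > 1 + β_k` for `k ≥ 1`, and `β₁ ∈ (max(1,2s), 1+s)`, i.e. `α_s := β₁-2s`
satisfies `α_s ∈ (0,1-s)` and `2s+α_s > 1`. -/
theorem exponents_structure (s : ℝ) (hs0 : 0 < s) (hs1 : s < 1) :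
    SolE s 0 ∧ SolE s (2*s - 1) ∧
    ∃ b : ℕ → ℝ,
      (∀ k : ℕ, 1 ≤ k →
        SolE s (b k) ∧ b k ∈ Set.Ioo ((k:ℝ) + max (2*s-1) 0) ((k:ℝ) + s) ∧
        ∀ β ∈ Set.Ioo ((k:ℝ) + max (2*s-1) 0) ((k:ℝ) + s), SolE s β → β = b k) ∧
      (∀ β : ℝ, max (2*s-1) 0 < β → SolE s β → ∃ k : ℕ, 1 ≤ k ∧ β = b k) ∧
      (∀ k : ℕ, 1 ≤ k → 1 + b k < b (k+1)) ∧
      Tendsto b atTop atTop ∧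
      b 1 ∈ Set.Ioo (max 1 (2*s)) (1+s) ∧
      b 1 - 2*s ∈ Set.Ioo 0 (1-s) ∧ 1 < 2*s + (b 1 - 2*s) := by
  have hma : 2*s-1 ≤ max (2*s-1) 0 := le_max_left _ _
  have hma0 : (0:ℝ) ≤ max (2*s-1) 0 := le_max_right _ _
  have hmas : max (2*s-1) 0 < s := max_lt (by linarith) hs0
  have hsol0 : SolE s 0 := by
    rw [SolE, show (0:ℝ)+1 = 1 by ring, Real.Gamma_one, show 2*s-0 = 2*s by ring,
      show π*(0-s) = -(π*s) by ring, Real.sin_neg]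
    ring
  have hsol1 : SolE s (2*s-1) := by
    rw [SolE, show 2*s-1+1 = 2*s by ring, show 2*s-(2*s-1) = 1 by ring, Real.Gamma_one,
      show π*(2*s-1-s) = π*s - π by ring, Real.sin_sub_pi]
    ring
  refine ⟨hsol0, hsol1, ?_⟩
  have exu : ∀ k : ℕ, 1 ≤ k → ∃ β : ℝ,
      (SolE s β ∧ β ∈ Ioo ((k:ℝ)+max (2*s-1) 0) ((k:ℝ)+s)) ∧
      ∀ γ : ℝ, (k:ℝ)-1+2*s < γ → γ < (k:ℝ)+s → SolE s γ → γ = β := by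
    intro k hk
    have hk1 : (1:ℝ) ≤ (k:ℝ) := by exact_mod_cast hk
    obtain ⟨β, hmem, heq⟩ := exists_sol hs0 hs1 k hk
    have hbl : (k:ℝ)-1+2*s < β := lt_of_le_of_lt (by linarith) hmem.1
    have hbr : β < (k:ℝ)+s := hmem.2
    have hE : SolE s β := (equiv_on_branch hs0 hs1 hbl hbr).mpr heq
    refine ⟨β, ⟨hE, hmem⟩, ?_⟩
    intro γ hγ1 hγ2 hγE
    have hγeq : Rf s γ = Lf s γ := (equiv_on_branch hs0 hs1 hγ1 hγ2).mp hγE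
    exact branch_unique hs0 hs1 ⟨hγ1, hγ2⟩ ⟨hbl, hbr⟩
      (by linarith) (by linarith) hγeq heq
  obtain ⟨b, hb⟩ : ∃ b : ℕ → ℝ, ∀ k : ℕ, 1 ≤ k →
      (SolE s (b k) ∧ b k ∈ Ioo ((k:ℝ)+max (2*s-1) 0) ((k:ℝ)+s)) ∧
      ∀ γ : ℝ, (k:ℝ)-1+2*s < γ → γ < (k:ℝ)+s → SolE s γ → γ = b k := by
    refine ⟨fun k => if h : 1 ≤ k then (exu k h).choose else 0, fun k hk => ?_⟩
    simp only [dif_pos hk]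
    exact (exu k hk).choose_spec
  refine ⟨b, ?_, ?_, ?_, ?_, ?_, ?_, ?_⟩
  · intro k hk
    have hk1 : (1:ℝ) ≤ (k:ℝ) := by exact_mod_cast hk
    obtain ⟨⟨hE, hmem⟩, huniq⟩ := hb k hk
    refine ⟨hE, hmem, fun β hβ hβE => ?_⟩
    exact huniq β (lt_of_le_of_lt (by linarith) hβ.1) hβ.2 hβE
  · intro β hβ hβE
    obtain ⟨k, hk, h1, h2⟩ := classify hs0 hs1 hβ hβE
    exact ⟨k, hk, (hb k hk).2 β h1 h2 hβE⟩
  · intro k hk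
    have hk1 : (1:ℝ) ≤ (k:ℝ) := by exact_mod_cast hk
    obtain ⟨⟨hEk, hmemk⟩, _⟩ := hb k hk
    obtain ⟨⟨hEk1, hmemk1⟩, huniq1⟩ := hb (k+1) (by omega)
    have hcast : ((k+1:ℕ):ℝ) = (k:ℝ)+1 := by push_cast; ring
    have hbkl : (k:ℝ)+max (2*s-1) 0 < b k := hmemk.1
    have hbkr : b k < (k:ℝ)+s := hmemk.2
    have hbranchk : (k:ℝ)-1+2*s < b k := by linarith
    have hRL : Rf s (b k) = Lf s (b k) :=
      (equiv_on_branch hs0 hs1 hbranchk hbkr).mp hEk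
    have hbk2s : 0 < b k+1-2*s := by linarith
    have hbk1 : (0:ℝ) < b k+1 := by linarith
    have hper : Rf s (b k+1) = Rf s (b k) := Rf_per (b k)
    have hstep : Lf s (b k+1) = ((b k+1)/(b k+1-2*s)) * Lf s (b k) :=
      Lf_step hbk1.ne' hbk2s.ne'
    have hLbk : 0 < Lf s (b k) := Lf_pos (by linarith) (by linarith) (by linarith)
    have hfac : 1 < (b k+1)/(b k+1-2*s) := by
      rw [lt_div_iff₀ hbk2s]; linarith
    have hRγLγ : Rf s (b k+1) < Lf s (b k+1) := by
      rw [hper, hRL, hstep]; nlinarith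
    have hb1l : ((k+1:ℕ):ℝ)-1+2*s < b (k+1) := by
      rw [hcast]; linarith [hmemk1.1, hcast]
    have hb1r : b (k+1) < ((k+1:ℕ):ℝ)+s := hmemk1.2
    have hRL1 : Rf s (b (k+1)) = Lf s (b (k+1)) :=
      (equiv_on_branch hs0 hs1 hb1l hb1r).mp hEk1
    by_contra hcon
    push_neg at hcon
    rcases eq_or_lt_of_le hcon with heq|hlt
    · rw [heq, show (1:ℝ) + b k = b k + 1 by ring] at hRL1
      exact hRγLγ.ne hRL1
    · have hγbr : b k + 1 < ((k+1:ℕ):ℝ)+s := by rw [hcast]; linarith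
      have hmono := branch_mono hs0 hs1 (k := k+1) hb1l
        (show b (k+1) < b k + 1 by linarith) hγbr
        (by rw [hcast]; linarith [hmemk1.1])
      have hLb1 : 0 < Lf s (b (k+1)) := Lf_pos (by linarith [hmemk1.1, hcast])
        (by rw [hcast] at hb1l; linarith) (by linarith)
      rw [hRL1] at hmono
      have hLγ : 0 < Lf s (b k+1) := Lf_pos (by linarith) (by linarith) (by linarith)
      nlinarith
  · apply tendsto_atTop_mono' atTop ?_ tendsto_natCast_atTop_atTop
    filter_upwards [eventually_ge_atTop 1] with k hk
    have := (hb k hk).1.2.1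
    linarith
  · have h1 := (hb 1 le_rfl).1.2
    have hmax : max 1 (2*s) = 1 + max (2*s-1) 0 := by
      rcases le_total (2*s) 1 with h|h
      · rw [max_eq_left h, max_eq_right (by linarith)]; ring
      · rw [max_eq_right h, max_eq_left (by linarith)]; ring
    rw [hmax]
    constructor
    · have := h1.1; push_cast at this; linarith
    · have := h1.2; push_cast at this; linarith
  · have h1 := (hb 1 le_rfl).1.2
    have hl : (1:ℝ) + max (2*s-1) 0 < b 1 := by
      have := h1.1; push_cast at this; linarith
    have hr : b 1 < 1 + s := by
      have := h1.2; push_cast at this; linarith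
    exact Set.mem_Ioo.mpr ⟨by linarith, by linarith⟩
  · have h1 := (hb 1 le_rfl).1.2
    have hl : (1:ℝ) + max (2*s-1) 0 < b 1 := by
      have := h1.1; push_cast at this; linarith
    linarith
end

section
/- Let s ∈ (0,1). (i) If s ≥ 1/2, then ∫₀¹ |log t|·(1−t)^{2s−1} dt ≤ 1. (ii) If s < 1/2, then ∫₀¹ t^{1−2s}·|log t|·(1−t)^{2s−1} dt ≤ 1/(2s). -/
open Real MeasureTheory Set

/-! Auxiliary lemmas -/

/-- Set integral over `Ioo 0 1` equals the interval integral. -/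
lemma aux_Ioo_eq_interval (f : ℝ → ℝ) :
    (∫ t in Ioo (0:ℝ) 1, f t) = ∫ t in (0:ℝ)..1, f t := by
  rw [intervalIntegral.integral_of_le zero_le_one, integral_Ioc_eq_integral_Ioo]

/-- `(1 - t)^p` is integrable on `(0,1)` for `p > -1`. -/
lemma aux_integrable_one_sub_rpow {p : ℝ} (hp : -1 < p) :
    IntegrableOn (fun t : ℝ => (1 - t) ^ p) (Ioo (0:ℝ) 1) := by
  have h := ((intervalIntegral.intervalIntegrable_rpow' (a := 0) (b := 1) hp).comp_sub_left 1).symm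
  simp only [sub_zero, sub_self] at h
  rwa [intervalIntegrable_iff_integrableOn_Ioo_of_le zero_le_one] at h

lemma aux_integral_one_sub_rpow {p : ℝ} (hp : -1 < p) :
    (∫ t in Ioo (0:ℝ) 1, (1 - t) ^ p) = 1 / (p + 1) := by
  rw [aux_Ioo_eq_interval]
  have h := intervalIntegral.integral_comp_sub_left (a := 0) (b := 1) (fun x : ℝ => x ^ p) 1
  simp only [sub_zero, sub_self] at h
  rw [h, integral_rpow (Or.inl hp), Real.one_rpow,
    Real.zero_rpow (by linarith : p + 1 ≠ 0)]
  ring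

/-- `|log t| ≤ 2 * t^(-1/2)` on `(0,1)`. -/
lemma aux_abs_log_le {t : ℝ} (ht0 : 0 < t) (ht1 : t < 1) :
    |Real.log t| ≤ 2 * t ^ (-(1/2) : ℝ) := by
  have hlt : Real.log t ≤ 0 := Real.log_nonpos ht0.le ht1.le
  rw [abs_of_nonpos hlt]
  have h1 : Real.log (t ^ (-(1/2) : ℝ)) ≤ t ^ (-(1/2) : ℝ) - 1 :=
    Real.log_le_sub_one_of_pos (Real.rpow_pos_of_pos ht0 _)
  rw [Real.log_rpow ht0] at h1
  nlinarith [Real.rpow_pos_of_pos ht0 (-(1/2) : ℝ)]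

/-- `-log` is integrable on `(0,1)`. -/
lemma aux_integrable_neg_log :
    IntegrableOn (fun t : ℝ => -Real.log t) (Ioo (0:ℝ) 1) := by
  have hmaj : IntegrableOn (fun t : ℝ => 2 * t ^ (-(1/2) : ℝ)) (Ioo (0:ℝ) 1) := by
    have h := (intervalIntegral.intervalIntegrable_rpow' (a := 0) (b := 1)
      (by norm_num : (-1 : ℝ) < -(1/2))).const_mul 2
    rwa [intervalIntegrable_iff_integrableOn_Ioo_of_le zero_le_one] at h
  refine MeasureTheory.Integrable.mono hmaj ?_ ?_
  · exact (Real.measurable_log.neg.aestronglyMeasurable).restrict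
  · rw [ae_restrict_iff' measurableSet_Ioo]
    refine ae_of_all _ fun t ht => ?_
    have h := aux_abs_log_le ht.1 ht.2
    rw [Real.norm_eq_abs, Real.norm_eq_abs, abs_neg]
    calc |Real.log t| ≤ 2 * t ^ (-(1/2) : ℝ) := h
      _ ≤ |2 * t ^ (-(1/2) : ℝ)| := le_abs_self _

/-- `∫₀¹ |log t| dt = 1`. -/
lemma aux_integral_abs_log : (∫ t in Ioo (0:ℝ) 1, |Real.log t|) = 1 := by
  have hcongr : (∫ t in Ioo (0:ℝ) 1, |Real.log t|) = ∫ t in Ioo (0:ℝ) 1, -Real.log t := by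
    refine setIntegral_congr_fun measurableSet_Ioo fun t ht => ?_
    exact abs_of_nonpos (Real.log_nonpos ht.1.le ht.2.le)
  rw [hcongr, aux_Ioo_eq_interval]
  have hint : IntervalIntegrable (fun t : ℝ => -Real.log t) volume 0 1 := by
    rw [intervalIntegrable_iff_integrableOn_Ioo_of_le zero_le_one]
    exact aux_integrable_neg_log
  have hderiv : ∀ x ∈ Ioo (0:ℝ) 1,
      HasDerivAt (fun t : ℝ => t - t * Real.log t) (-Real.log x) x := by
    intro x hx
    have h1 : HasDerivAt (fun t : ℝ => t * Real.log t) (Real.log x + 1) x :=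
      Real.hasDerivAt_mul_log hx.1.ne'
    have h2 : HasDerivAt (fun t : ℝ => t - t * Real.log t) (1 - (Real.log x + 1)) x :=
      (hasDerivAt_id x).sub h1
    convert h2 using 1; ring
  have h0 : Filter.Tendsto (fun t : ℝ => t - t * Real.log t) (nhdsWithin 0 (Ioi 0)) (nhds 0) := by
    have h1 : Filter.Tendsto (fun t : ℝ => Real.log t * t) (nhdsWithin 0 (Ioi 0)) (nhds 0) := by
      have := tendsto_log_mul_rpow_nhdsGT_zero one_pos
      simpa [Real.rpow_one] using this
    have h2 : Filter.Tendsto (fun t : ℝ => t) (nhdsWithin 0 (Ioi 0)) (nhds 0) :=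
      Filter.tendsto_id.mono_left nhdsWithin_le_nhds
    have := h2.sub h1
    simp only [sub_zero] at this
    convert this using 2 with t
    ring
  have h1 : Filter.Tendsto (fun t : ℝ => t - t * Real.log t) (nhdsWithin 1 (Iio 1)) (nhds 1) := by
    have hc : ContinuousAt (fun t : ℝ => t - t * Real.log t) 1 := by
      have : ContinuousAt Real.log 1 := Real.continuousAt_log one_ne_zero
      fun_prop (disch := norm_num)
    have := hc.tendsto.mono_left (nhdsWithin_le_nhds (s := Iio 1))
    simpa using this
  have := intervalIntegral.integral_eq_sub_of_hasDerivAt_of_tendsto one_pos hderiv hint h0 h1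
  rw [this]; norm_num

/-- `t^a * (1-t)^(-a)` is integrable on `(0,1)` for `0 ≤ a`, `a < 1`. -/
lemma aux_integrable_J {a : ℝ} (ha0 : 0 ≤ a) (ha1 : a < 1) :
    IntegrableOn (fun t : ℝ => t ^ a * (1 - t) ^ (-a)) (Ioo (0:ℝ) 1) := by
  refine MeasureTheory.Integrable.mono (aux_integrable_one_sub_rpow (by linarith : (-1:ℝ) < -a)) ?_ ?_
  · refine Measurable.aestronglyMeasurable ?_ |>.restrict
    exact (measurable_id.pow_const a).mul ((measurable_const.sub measurable_id).pow_const (-a))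
  · rw [ae_restrict_iff' measurableSet_Ioo]
    refine ae_of_all _ fun t ht => ?_
    have ht0 := ht.1; have ht1 := ht.2
    have h1t : (0:ℝ) < 1 - t := by linarith
    rw [Real.norm_eq_abs, Real.norm_eq_abs,
      abs_of_nonneg (by positivity : (0:ℝ) ≤ t ^ a * (1 - t) ^ (-a)),
      abs_of_nonneg (by positivity : (0:ℝ) ≤ (1 - t) ^ (-a))]
    have hta : t ^ a ≤ 1 := Real.rpow_le_one ht0.le ht1.le ha0
    nlinarith [Real.rpow_pos_of_pos h1t (-a)]

/-- Symmetrization : `∫₀¹ t^a (1-t)^(-a) dt ≥ 1` for `0 ≤ a < 1`. -/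
lemma aux_J_ge_one {a : ℝ} (ha0 : 0 ≤ a) (ha1 : a < 1) :
    1 ≤ ∫ t in Ioo (0:ℝ) 1, t ^ a * (1 - t) ^ (-a) := by
  set h : ℝ → ℝ := fun t => t ^ a * (1 - t) ^ (-a) with hh
  have hint : IntegrableOn h (Ioo (0:ℝ) 1) := aux_integrable_J ha0 ha1
  have hint' : IntegrableOn (fun t => h (1 - t)) (Ioo (0:ℝ) 1) := by
    have := (((intervalIntegrable_iff_integrableOn_Ioo_of_le (zero_le_one)).2 hint).comp_sub_left 1).symm
    simp only [sub_zero, sub_self] at this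
    rwa [intervalIntegrable_iff_integrableOn_Ioo_of_le zero_le_one] at this
  have hswap : (∫ t in Ioo (0:ℝ) 1, h (1 - t)) = ∫ t in Ioo (0:ℝ) 1, h t := by
    rw [aux_Ioo_eq_interval, aux_Ioo_eq_interval]
    have := intervalIntegral.integral_comp_sub_left (a := 0) (b := 1) h 1
    simpa using this
  have hsum : 2 ≤ ∫ t in Ioo (0:ℝ) 1, (h t + h (1 - t)) := by
    have hkey : ∀ t ∈ Ioo (0:ℝ) 1, (2:ℝ) ≤ h t + h (1 - t) := by
      intro t ht
      have ht0 := ht.1; have ht1 := ht.2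
      have h1t : (0:ℝ) < 1 - t := by linarith
      have hy : (0:ℝ) < t ^ a * (1 - t) ^ (-a) := by positivity
      have hinv : h (1 - t) = (h t)⁻¹ := by
        simp only [hh]
        rw [sub_sub_cancel, Real.rpow_neg ht0.le, Real.rpow_neg h1t.le, mul_inv, inv_inv]
        ring
      rw [hinv]
      have hpos : 0 < h t := hy
      rw [← sub_nonneg]
      have h2 : h t + (h t)⁻¹ - 2 = (h t - 1)^2 / h t := by field_simp; ring
      rw [h2]
      positivity
    have := setIntegral_ge_of_const_le (c := 2) measurableSet_Ioo
      (by simp : volume (Ioo (0:ℝ) 1) ≠ ⊤) hkey (hint.add hint')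
    simpa using this
  rw [MeasureTheory.integral_add hint hint', hswap] at hsum
  linarith

/-- **elementary integral bounds from the proof of Lemma 2.6.**
For `s ∈ (0,1)`: if `s ≥ 1/2` then `∫₀¹ |log t| (1-t)^{2s-1} dt ≤ 1`, and if `s < 1/2`
then `∫₀¹ t^{1-2s} |log t| (1-t)^{2s-1} dt ≤ 1/(2s)`. -/
theorem log_integral_bounds (s : ℝ) (hs0 : 0 < s) (hs1 : s < 1) :
    (1/2 ≤ s →
      (∫ t in Ioo (0:ℝ) 1, |Real.log t| * (1 - t) ^ (2*s - 1)) ≤ 1) ∧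
    (s < 1/2 →
      (∫ t in Ioo (0:ℝ) 1, t ^ (1 - 2*s) * |Real.log t| * (1 - t) ^ (2*s - 1)) ≤ 1/(2*s)) := by
  constructor
  · -- case s ≥ 1/2
    intro hs
    have hmono : (∫ t in Ioo (0:ℝ) 1, |Real.log t| * (1 - t) ^ (2*s - 1)) ≤
        ∫ t in Ioo (0:ℝ) 1, |Real.log t| := by
      refine integral_mono_of_nonneg ?_ ?_ ?_
      · filter_upwards [ae_restrict_mem measurableSet_Ioo] with t ht
        have h1t : (0:ℝ) < 1 - t := by linarith [ht.2]
        positivity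
      · exact aux_integrable_neg_log.congr_fun
          (fun t ht => (abs_of_nonpos (Real.log_nonpos ht.1.le ht.2.le)).symm)
          measurableSet_Ioo
      · filter_upwards [ae_restrict_mem measurableSet_Ioo] with t ht
        have h1t : (0:ℝ) < 1 - t := by linarith [ht.2]
        have h1t' : (1:ℝ) - t ≤ 1 := by linarith [ht.1]
        have := Real.rpow_le_one h1t.le h1t' (by linarith : (0:ℝ) ≤ 2*s - 1)
        nlinarith [abs_nonneg (Real.log t)]
    rw [aux_integral_abs_log] at hmono
    exact hmono
  · -- case s < 1/2
    intro hs
    set a : ℝ := 1 - 2*s with ha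
    have ha0 : 0 < a := by simp only [ha]; linarith
    have ha1 : a < 1 := by simp only [ha]; linarith
    have hb : 2*s - 1 = -a := by simp only [ha]; ring
    -- majorant : g t = (1/a) * ((1-t)^(-a) - t^a * (1-t)^(-a))
    have hintg1 : IntegrableOn (fun t : ℝ => (1 - t) ^ (-a)) (Ioo (0:ℝ) 1) :=
      aux_integrable_one_sub_rpow (by linarith)
    have hintg2 : IntegrableOn (fun t : ℝ => t ^ a * (1 - t) ^ (-a)) (Ioo (0:ℝ) 1) :=
      aux_integrable_J ha0.le ha1
    have hintg : IntegrableOn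
        (fun t : ℝ => (1/a) * ((1 - t) ^ (-a) - t ^ a * (1 - t) ^ (-a))) (Ioo (0:ℝ) 1) :=
      (hintg1.sub hintg2).const_mul _
    have hmono : (∫ t in Ioo (0:ℝ) 1, t ^ (1 - 2*s) * |Real.log t| * (1 - t) ^ (2*s - 1)) ≤
        ∫ t in Ioo (0:ℝ) 1, (1/a) * ((1 - t) ^ (-a) - t ^ a * (1 - t) ^ (-a)) := by
      refine integral_mono_of_nonneg ?_ hintg ?_
      · filter_upwards [ae_restrict_mem measurableSet_Ioo] with t ht
        have h1t : (0:ℝ) < 1 - t := by linarith [ht.2]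
        have ht0 := ht.1
        positivity
      · filter_upwards [ae_restrict_mem measurableSet_Ioo] with t ht
        have ht0 := ht.1; have ht1 := ht.2
        have h1t : (0:ℝ) < 1 - t := by linarith
        -- key : 1 + a * (-log t) ≤ t^(-a), so t^a * (1 + a*(-log t)) ≤ 1
        have hexp : 1 + a * (-Real.log t) ≤ t ^ (-a) := by
          have h1 : a * (-Real.log t) + 1 ≤ Real.exp (a * (-Real.log t)) :=
            Real.add_one_le_exp _
          have h2 : t ^ (-a) = Real.exp (a * (-Real.log t)) := by
            rw [Real.rpow_def_of_pos ht0]; ring_nf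
          linarith [h1, h2.ge]
        have hta : (0:ℝ) < t ^ a := Real.rpow_pos_of_pos ht0 _
        have hmul : t ^ a * (1 + a * (-Real.log t)) ≤ 1 := by
          calc t ^ a * (1 + a * (-Real.log t)) ≤ t ^ a * t ^ (-a) := by
                exact mul_le_mul_of_nonneg_left hexp hta.le
            _ = 1 := by
                rw [← Real.rpow_add ht0]; simp
        have hL : |Real.log t| = -Real.log t :=
          abs_of_nonpos (Real.log_nonpos ht0.le ht1.le)
        have h1ta : (0:ℝ) < (1 - t) ^ (-a) := Real.rpow_pos_of_pos h1t _
        rw [hb, hL, div_mul_eq_mul_div, le_div_iff₀ ha0]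
        calc t ^ a * (-Real.log t) * (1 - t) ^ (-a) * a
            = (a * (t ^ a * (-Real.log t))) * (1 - t) ^ (-a) := by ring
          _ ≤ (1 - t ^ a) * (1 - t) ^ (-a) :=
              mul_le_mul_of_nonneg_right (by nlinarith [hmul]) h1ta.le
          _ = 1 * ((1 - t) ^ (-a) - t ^ a * (1 - t) ^ (-a)) := by ring
    -- compute the majorant's integral
    have hval : (∫ t in Ioo (0:ℝ) 1, (1/a) * ((1 - t) ^ (-a) - t ^ a * (1 - t) ^ (-a)))
        = (1/a) * ((1/(2*s)) - ∫ t in Ioo (0:ℝ) 1, t ^ a * (1 - t) ^ (-a)) := by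
      rw [integral_const_mul, integral_sub hintg1 hintg2,
        aux_integral_one_sub_rpow (by linarith : (-1:ℝ) < -a)]
      have : -a + 1 = 2*s := by rw [ha]; ring
      rw [this]
    have hJ := aux_J_ge_one ha0.le ha1
    have h2s : (0:ℝ) < 2*s := by linarith
    calc (∫ t in Ioo (0:ℝ) 1, t ^ (1 - 2*s) * |Real.log t| * (1 - t) ^ (2*s - 1))
        ≤ (1/a) * ((1/(2*s)) - ∫ t in Ioo (0:ℝ) 1, t ^ a * (1 - t) ^ (-a)) := by
          rw [← hval]; exact hmono
      _ ≤ (1/a) * ((1/(2*s)) - 1) := by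
          apply mul_le_mul_of_nonneg_left _ (by positivity)
          linarith
      _ = 1/(2*s) := by
          rw [ha]
          field_simp
          exact div_self ha0.ne'
end
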